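/- arXiv:1711.00531 — 2 statements merged into one kernel-verified Lean document; each statement's English description precedes it below -/
import Mathlib

section
/- Let A be a commutative ring, m ≥ 1, and let φ : A → k[t]/(t^{m+1}) be a ring homomorphism (k a field) such that the induced composite map A → k[t]/(t^2) is surjective. Then φ is surjective. -/
/-!
Write `t` for the class of `X` in `k[X]/(X^(m+1))`. Lifting `t` modulo `t²` gives `s = φ a₀` with
`s = t (1 - t c)`; as `t` is nilpotent, `1 - t c` is a unit, so `s` generates the ideal `(t)`.
Surjectivity modulo `t²`, hence modulo `(s)`, then bootstraps: if `r ≡ φ a` modulo `sⁿ`, correcting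
the error by `φ a₀ⁿ` times a lift of its cofactor gives agreement modulo `sⁿ⁺¹`. Since `s` is
nilpotent this reaches `r` itself.
-/

open Polynomial

namespace Ideal

variable {R : Type*} [CommRing R]

theorem Quotient.mem_map_mk_of_factor_eq_zero {I J : Ideal R} (h : I ≤ J) {r : R ⧸ I}
    (hr : Quotient.factor h r = 0) : r ∈ J.map (Quotient.mk I) := by
  obtain ⟨x, rfl⟩ := Quotient.mk_surjective r
  rw [Quotient.factor_mk, Quotient.eq_zero_iff_mem] at hr
  exact mem_map_of_mem _ hr

theorem span_singleton_eq_of_sub_mem_span_sq {x y : R} (hx : IsNilpotent x)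
    (hxy : x - y ∈ span {x ^ 2}) : span {y} = span {x} := by
  obtain ⟨c, hc⟩ := mem_span_singleton'.mp hxy
  have hy : y = x * (1 - c * x) := by linear_combination hc
  rw [hy, span_singleton_mul_right_unit]
  exact ((Commute.all c x).isNilpotent_mul_left hx).isUnit_one_sub

end Ideal

section

variable {A R : Type*} [CommRing A] [CommRing R]

theorem RingHom.exists_sub_mem_span_pow_of_forall_sub_mem_span (φ : A →+* R) (a₀ : A)
    (h : ∀ r, ∃ a, r - φ a ∈ Ideal.span {φ a₀}) (n : ℕ) (r : R) :
    ∃ a, r - φ a ∈ Ideal.span {φ a₀ ^ n} := by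
  induction n generalizing r with
  | zero => exact ⟨0, by simp⟩
  | succ n ih =>
    obtain ⟨a, ha⟩ := ih r
    obtain ⟨b, hb⟩ := Ideal.mem_span_singleton'.mp ha
    obtain ⟨a', ha'⟩ := h b
    obtain ⟨c, hc⟩ := Ideal.mem_span_singleton'.mp ha'
    refine ⟨a + a₀ ^ n * a', Ideal.mem_span_singleton'.mpr ⟨c, ?_⟩⟩
    rw [map_add, map_mul, map_pow]
    linear_combination hb + φ a₀ ^ n * hc

theorem RingHom.surjective_of_isNilpotent_of_forall_sub_mem_span (φ : A →+* R) (a₀ : A)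
    (hnil : IsNilpotent (φ a₀)) (h : ∀ r, ∃ a, r - φ a ∈ Ideal.span {φ a₀}) :
    Function.Surjective φ := by
  obtain ⟨n, hn⟩ := hnil
  intro r
  obtain ⟨a, ha⟩ := φ.exists_sub_mem_span_pow_of_forall_sub_mem_span a₀ h n r
  rw [hn, Ideal.span_singleton_eq_bot.mpr rfl, Ideal.mem_bot, sub_eq_zero] at ha
  exact ⟨a, ha.symm⟩

end

theorem surjective_of_surjective_mod_sq_general
    (k : Type*) [Field k] (A : Type*) [CommRing A] (m : ℕ)
    (φ : A →+* Polynomial k ⧸ Ideal.span {(Polynomial.X : Polynomial k) ^ (m + 1)})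
    (hle : Ideal.span {(Polynomial.X : Polynomial k) ^ (m + 1)} ≤
      Ideal.span {(Polynomial.X : Polynomial k) ^ 2})
    (hsurj : Function.Surjective
      ((Ideal.Quotient.factor hle).comp φ)) :
    Function.Surjective φ := by
  set t := Ideal.Quotient.mk (Ideal.span {(X : k[X]) ^ (m + 1)}) X
  have ht : IsNilpotent t := ⟨m + 1, by
    rw [← map_pow, Ideal.Quotient.eq_zero_iff_mem]; exact Ideal.mem_span_singleton_self _⟩
  have hlift : ∀ r, ∃ a, r - φ a ∈ Ideal.span {t ^ 2} := fun r => by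
    obtain ⟨a, ha⟩ := hsurj (Ideal.Quotient.factor hle r)
    refine ⟨a, ?_⟩
    have hr : Ideal.Quotient.factor hle (r - φ a) = 0 := by
      rw [map_sub, ← RingHom.comp_apply, ha, sub_self]
    have h := Ideal.Quotient.mem_map_mk_of_factor_eq_zero hle hr
    rwa [Ideal.map_span, Set.image_singleton, map_pow] at h
  obtain ⟨a₀, ha₀⟩ := hlift t
  have hspan : Ideal.span {φ a₀} = Ideal.span {t} :=
    Ideal.span_singleton_eq_of_sub_mem_span_sq ht ha₀
  have hnil : IsNilpotent (φ a₀) := by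
    obtain ⟨c, hc⟩ := Ideal.mem_span_singleton'.mp (hspan ▸ Ideal.mem_span_singleton_self (φ a₀))
    exact hc ▸ (Commute.all c t).isNilpotent_mul_left ht
  refine φ.surjective_of_isNilpotent_of_forall_sub_mem_span a₀ hnil fun r => ?_
  obtain ⟨a, ha⟩ := hlift r
  exact ⟨a, hspan ▸ Ideal.span_singleton_le_span_singleton.mpr (dvd_pow_self t two_ne_zero) ha⟩

/-- Let `A` be a commutative ring, `m ≥ 1`, and `φ : A → k[t]/(t^(m+1))` a
ring homomorphism (`k` a field) such that the induced composite `A → k[t]/(t^2)` is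
surjective.  Then `φ` is surjective. -/
theorem surjective_of_surjective_mod_sq
    (k : Type*) [Field k] (A : Type*) [CommRing A] (m : ℕ) (hm : 1 ≤ m)
    (φ : A →+* Polynomial k ⧸ Ideal.span {(Polynomial.X : Polynomial k) ^ (m + 1)})
    (hle : Ideal.span {(Polynomial.X : Polynomial k) ^ (m + 1)} ≤
      Ideal.span {(Polynomial.X : Polynomial k) ^ 2})
    (hsurj : Function.Surjective
      ((Ideal.Quotient.factor hle).comp φ)) :
    Function.Surjective φ :=
  surjective_of_surjective_mod_sq_general k A m φ hle hsurj
end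

section
/- For every n ≥ 0 and i with 0 ≤ i ≤ n, the coefficient of H^i in the power series expansion of (1+H)^{n+2}/(1+2H) in Z[[H]] is a positive integer. -/
/-!
Since `(1 + H)^2 = (1 + 2H) + H^2`, the series `c_n = (1 + H)^(n+2) / (1 + 2H)` satisfies
`c_(n+2) = (1 + H)^(n+2) + H^2 c_n`. Hence for `i ≥ 2` the coefficient of `H^i` in `c_(n+2)` is
`binom(n+2, i)` plus the coefficient of `H^(i-2)` in `c_n`, and induction on `n` in steps of two
reduces positivity to the coefficients `1` and `n` of `H^0` and `H^1`.
-/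

open PowerSeries

namespace PowerSeries

section CommRing

variable (R : Type*) [CommRing R]

theorem coeff_one_add_X_pow (m i : ℕ) : coeff i ((1 + X : R⟦X⟧) ^ m) = m.choose i := by
  rw [← Polynomial.coeff_one_add_X_pow R m i, ← Polynomial.coeff_coe]
  simp

/-- The total Chern class of a smooth quadric `Q ⊂ ℙ^(n+1)`, as a series in the hyperplane class. -/
noncomputable def quadricChernSeries (n : ℕ) : R⟦X⟧ :=
  (1 + X) ^ (n + 2) * invOfUnit (1 + 2 * X) 1

variable {R}

theorem one_add_two_X_mul_invOfUnit : (1 + 2 * X : R⟦X⟧) * invOfUnit (1 + 2 * X) 1 = 1 :=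
  mul_invOfUnit _ _ (by simp)

theorem constantCoeff_invOfUnit_one_add_two_X :
    constantCoeff (invOfUnit (1 + 2 * X : R⟦X⟧) 1) = 1 := by
  simp [constantCoeff_invOfUnit]

theorem coeff_one_invOfUnit_one_add_two_X : coeff 1 (invOfUnit (1 + 2 * X : R⟦X⟧) 1) = -2 := by
  have h := congrArg (coeff 1) (one_add_two_X_mul_invOfUnit (R := R))
  rw [coeff_one_mul, constantCoeff_invOfUnit_one_add_two_X] at h
  simp [map_ofNat] at h
  linear_combination h

theorem quadricChernSeries_add_two (n : ℕ) :
    quadricChernSeries R (n + 2) = (1 + X) ^ (n + 2) + X ^ 2 * quadricChernSeries R n := by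
  have hsq : (1 + X : R⟦X⟧) ^ 2 = (1 + 2 * X) + X ^ 2 := by ring
  calc quadricChernSeries R (n + 2)
      = (1 + X) ^ (n + 2) * ((1 + 2 * X) * invOfUnit (1 + 2 * X) 1)
          + X ^ 2 * quadricChernSeries R n := by
        rw [quadricChernSeries, quadricChernSeries, pow_add _ (n + 2), hsq]; ring
    _ = (1 + X) ^ (n + 2) + X ^ 2 * quadricChernSeries R n := by
        rw [one_add_two_X_mul_invOfUnit, mul_one]

theorem constantCoeff_quadricChernSeries (n : ℕ) : constantCoeff (quadricChernSeries R n) = 1 := by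
  simp [quadricChernSeries]

theorem coeff_one_quadricChernSeries (n : ℕ) : coeff 1 (quadricChernSeries R n) = n := by
  rw [quadricChernSeries, coeff_one_mul, coeff_one_add_X_pow, coeff_one_invOfUnit_one_add_two_X,
    constantCoeff_invOfUnit_one_add_two_X]
  simp

theorem coeff_add_two_quadricChernSeries_add_two (n i : ℕ) :
    coeff (i + 2) (quadricChernSeries R (n + 2)) =
      (n + 2).choose (i + 2) + coeff i (quadricChernSeries R n) := by
  rw [quadricChernSeries_add_two, map_add, coeff_X_pow_mul, coeff_one_add_X_pow]

end CommRing

theorem coeff_quadricChernSeries_pos {R : Type*} [CommRing R] [PartialOrder R]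
    [IsStrictOrderedRing R] {n i : ℕ} (hi : i ≤ n) :
    0 < coeff i (quadricChernSeries R n) := by
  induction n using Nat.strong_induction_on generalizing i with
  | _ n ih =>
    rcases i with _ | _ | j
    · simp [constantCoeff_quadricChernSeries]
    · rw [coeff_one_quadricChernSeries]
      exact_mod_cast hi
    · obtain ⟨m, rfl⟩ : ∃ m, n = m + 2 := ⟨n - 2, by omega⟩
      rw [coeff_add_two_quadricChernSeries_add_two]
      have := ih m (by omega) (i := j) (by omega)
      positivity

end PowerSeries

/-- For every `n ≥ 0` and `0 ≤ i ≤ n`, the coefficient of `H^i` in the power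
series expansion of `(1+H)^(n+2)/(1+2H)` in `ℤ⟦H⟧` is a positive integer.  Here
`1/(1+2H)` is the formal inverse of `1+2H` (whose constant coefficient is the unit `1`). -/
theorem quadric_chern_coeff_pos (n i : ℕ) (hi : i ≤ n) :
    0 < (PowerSeries.coeff (R := ℤ) i)
      ((1 + PowerSeries.X) ^ (n + 2) *
        PowerSeries.invOfUnit (1 + 2 * PowerSeries.X) 1) :=
  coeff_quadricChernSeries_pos hi
end
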